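/- Let C be a coalgebra over a field k and let π : C → C/I₁(C) be the quotient linear map. Then the strong-cocommutativity identities hold: for every x ∈ C, (π ⊗ id_C)(Δ(x)) = (π ⊗ id_C)(τ(Δ(x))), where τ : C ⊗ C → C ⊗ C is the flip; in Sweedler notation, x̄₁ ⊗ x₂ = x̄₂ ⊗ x₁ in (C/I₁(C)) ⊗ C, where x̄ denotes the class of x modulo I₁(C). -/

import Mathlib

open TensorProduct

/-- `I₁(C)`: the subspace of a coalgebra `C` spanned by the elements
`φ(x₁)·x₂ − φ(x₂)·x₁` for `x ∈ C` and linear forms `φ : C → k`. -/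
noncomputable def lazySubspace (k : Type*) [Field k] (C : Type*)
    [AddCommGroup C] [Module k C] [Coalgebra k C] : Submodule k C :=
  Submodule.span k {y : C | ∃ (x : C) (φ : C →ₗ[k] k),
    y = (TensorProduct.lid k C)
          (TensorProduct.map φ LinearMap.id (Coalgebra.comul x))
      - (TensorProduct.rid k C)
          (TensorProduct.map LinearMap.id φ (Coalgebra.comul x))}

/-! Contracting the right factor of `x̄₁ ⊗ x₂ - x̄₂ ⊗ x₁ ∈ (C/I₁(C)) ⊗ C` against a linear
form `ψ` gives the class of `ψ(x₂)·x₁ - ψ(x₁)·x₂`, which is minus a generator of `I₁(C)`, hence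
zero. Over a field the linear forms on `C` separate the points of `Q ⊗ C`, so the tensor itself
vanishes. -/

namespace TensorProduct

variable {k : Type*} [Field k] {Q C : Type*}
  [AddCommGroup Q] [Module k Q] [AddCommGroup C] [Module k C]

theorem ext_of_forall_rid_lTensor {t₁ t₂ : Q ⊗[k] C}
    (h : ∀ ψ : C →ₗ[k] k,
      TensorProduct.rid k Q (ψ.lTensor Q t₁) = TensorProduct.rid k Q (ψ.lTensor Q t₂)) :
    t₁ = t₂ := by
  classical
  -- in a basis of `C`, `Q ⊗ C ≃ (ι →₀ Q)` and the coordinates are contractions with `b.coord i`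
  let b := Module.Basis.ofVectorSpace k C
  apply (LinearEquiv.lTensor Q b.repr).injective
  apply (finsuppScalarRight k k Q _).injective
  ext i
  have hcoord := h (Finsupp.lapply i ∘ₗ b.repr.toLinearMap)
  rw [LinearMap.lTensor_comp_apply, LinearMap.lTensor_comp_apply] at hcoord
  rw [finsuppScalarRight_apply, finsuppScalarRight_apply]
  exact hcoord

section Contraction

variable {R M N C : Type*} [CommSemiring R] [AddCommMonoid M] [Module R M]
  [AddCommMonoid N] [Module R N] [AddCommMonoid C] [Module R C]

theorem rid_lTensor_map_id (f : M →ₗ[R] N) (ψ : C →ₗ[R] R) (t : M ⊗[R] C) :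
    TensorProduct.rid R N (ψ.lTensor N (map f LinearMap.id t))
      = f (TensorProduct.rid R M (ψ.lTensor M t)) := by
  induction t using TensorProduct.induction_on <;> simp_all

theorem rid_lTensor_comm (ψ : C →ₗ[R] R) (t : C ⊗[R] C) :
    TensorProduct.rid R C (ψ.lTensor C (TensorProduct.comm R C C t))
      = TensorProduct.lid R C (ψ.rTensor C t) := by
  rw [LinearMap.lTensor_comm, rid_comm]

end Contraction

end TensorProduct

theorem lid_rTensor_comul_sub_rid_lTensor_comul_mem_lazySubspace {k C : Type*} [Field k]
    [AddCommGroup C] [Module k C] [Coalgebra k C] (x : C) (φ : C →ₗ[k] k) :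
    TensorProduct.lid k C (φ.rTensor C (Coalgebra.comul x))
      - TensorProduct.rid k C (φ.lTensor C (Coalgebra.comul x)) ∈ lazySubspace k C :=
  Submodule.subset_span ⟨x, φ, rfl⟩

theorem strong_cocommutativity (k : Type*) [Field k] (C : Type*)
    [AddCommGroup C] [Module k C] [Coalgebra k C] :
    ∀ x : C,
      TensorProduct.map (lazySubspace k C).mkQ (LinearMap.id : C →ₗ[k] C)
          (Coalgebra.comul (R := k) x)
        = TensorProduct.map (lazySubspace k C).mkQ (LinearMap.id : C →ₗ[k] C)
            ((TensorProduct.comm k C C) (Coalgebra.comul (R := k) x)) := by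
  intro x
  refine TensorProduct.ext_of_forall_rid_lTensor fun ψ => ?_
  rw [rid_lTensor_map_id, rid_lTensor_map_id, rid_lTensor_comm]
  exact ((Submodule.Quotient.eq _).2
    (lid_rTensor_comul_sub_rid_lTensor_comul_mem_lazySubspace x ψ)).symm
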